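/- There exists a constant C > 1 such that for every nonempty subset J of the integers {n ∈ ℕ : n ≥ 2} and every real number M with 0 < M ≤ (min J)², there exists an entire function f : ℂ → ℂ satisfying: (i) M_f(r) ≤ C·exp(C·log²(r+1)) for all r > 0; and (ii) f(2^n) = M for every n ∈ J, and f(2^n) = 0 for every integer n ≥ 2 with n ∉ J. The constant C is independent of J and M. -/

import Mathlib

/-!
The function `lagrangeBasis n z = ∏_{m ≥ 2, m ≠ n} (2^m - z) / (2^m - 2^n)` is entire, equals `1`
at `2^n` and vanishes at every other node `2^m`, so `∑_{n ∈ J} M · lagrangeBasis n` takes the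
prescribed values. For `|z| ≤ r` the factors with `m < n` are at most `(r+1) / 2^(n-1-m)`: their
product `(r+1)^(n-2) / 2^((n-2)(n-3)/2)` decays superexponentially in `n` and absorbs the weight
`M ≤ n²`. The factors with `m > n` are at most `1 + (r+1) / 2^(m-n-1)`, and such a product is
`≤ (r+2)^k e²` once `2^k ≥ r+1`, which is `exp O(log² (r+1))`.
-/

open Filter Finset Real

namespace Dispatcher

variable {z : ℂ} {r : ℝ}

lemma norm_two_pow_sub_le (hz : ‖z‖ ≤ r) (a : ℕ) : ‖(2 : ℂ) ^ a - z‖ ≤ 2 ^ a * (r + 1) := by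
  have h1 : (1 : ℝ) ≤ 2 ^ a := one_le_pow₀ one_le_two
  have hr : 0 ≤ r := (norm_nonneg z).trans hz
  calc ‖(2 : ℂ) ^ a - z‖ ≤ ‖(2 : ℂ) ^ a‖ + ‖z‖ := norm_sub_le _ _
    _ ≤ 2 ^ a + r := by simpa using hz
    _ ≤ 2 ^ a * (r + 1) := by nlinarith

lemma two_pow_le_norm_two_pow_sub (a j : ℕ) :
    (2 : ℝ) ^ (a + j) ≤ ‖(2 : ℂ) ^ (a + 1 + j) - 2 ^ a‖ := by
  have h : (2 : ℂ) ^ (a + 1 + j) - 2 ^ a = ((2 * 2 ^ (a + j) - 2 ^ a : ℝ) : ℂ) := by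
    push_cast; ring
  have ha : (2 : ℝ) ^ a ≤ 2 ^ (a + j) := pow_le_pow_right₀ one_le_two (Nat.le_add_right a j)
  have h0 : (0 : ℝ) ≤ 2 ^ a := by positivity
  rw [h, Complex.norm_real, Real.norm_eq_abs, abs_of_nonneg (by linarith)]
  linarith

lemma norm_two_pow_sub_div_le (hz : ‖z‖ ≤ r) (a j : ℕ) :
    ‖((2 : ℂ) ^ a - z) / (2 ^ (a + 1 + j) - 2 ^ a)‖ ≤ (r + 1) / 2 ^ j := by
  have hr : 0 ≤ r := (norm_nonneg z).trans hz
  calc ‖((2 : ℂ) ^ a - z) / (2 ^ (a + 1 + j) - 2 ^ a)‖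
      ≤ 2 ^ a * (r + 1) / 2 ^ (a + j) := by
        rw [norm_div]
        exact div_le_div₀ (by positivity) (norm_two_pow_sub_le hz a) (by positivity)
          (two_pow_le_norm_two_pow_sub a j)
    _ = (r + 1) / 2 ^ j := by rw [pow_add]; field_simp

/-- For `2 ≤ m ≠ n`, `1 + lagrangeTerm n m z = (2 ^ m - z) / (2 ^ m - 2 ^ n)` is the factor of
`lagrangeBasis n` belonging to the node `2 ^ m`; all other indices contribute the factor `1`. -/
noncomputable def lagrangeTerm (n m : ℕ) (z : ℂ) : ℂ :=
  if 2 ≤ m ∧ m ≠ n then (2 ^ n - z) / (2 ^ m - 2 ^ n) else 0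

noncomputable def lagrangeBasis (n : ℕ) (z : ℂ) : ℂ := ∏' m, (1 + lagrangeTerm n m z)

variable {n m : ℕ}

lemma two_pow_sub_two_pow_ne_zero (h : m ≠ n) : (2 : ℂ) ^ m - 2 ^ n ≠ 0 := by
  rw [sub_ne_zero]
  exact fun he => h (Nat.pow_right_injective le_rfl (by exact_mod_cast he))

lemma lagrangeTerm_self (n : ℕ) (z : ℂ) : lagrangeTerm n n z = 0 := by
  simp [lagrangeTerm]

lemma lagrangeTerm_of_lt_two (h : m < 2) (z : ℂ) : lagrangeTerm n m z = 0 := by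
  simp [lagrangeTerm]; omega

lemma one_add_lagrangeTerm (h2 : 2 ≤ m) (hmn : m ≠ n) (z : ℂ) :
    1 + lagrangeTerm n m z = (2 ^ m - z) / (2 ^ m - 2 ^ n) := by
  rw [lagrangeTerm, if_pos ⟨h2, hmn⟩]
  field_simp [two_pow_sub_two_pow_ne_zero hmn]
  ring

lemma lagrangeTerm_two_pow_self (n m : ℕ) : lagrangeTerm n m (2 ^ n) = 0 := by
  simp [lagrangeTerm]

lemma one_add_lagrangeTerm_two_pow (h2 : 2 ≤ m) (hmn : m ≠ n) :
    1 + lagrangeTerm n m (2 ^ m) = 0 := by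
  rw [one_add_lagrangeTerm h2 hmn, sub_self, zero_div]

lemma norm_one_add_lagrangeTerm_le_of_lt (hz : ‖z‖ ≤ r) (h2 : 2 ≤ m) (j : ℕ) :
    ‖1 + lagrangeTerm (m + 1 + j) m z‖ ≤ (r + 1) / 2 ^ j := by
  rw [one_add_lagrangeTerm h2 (by omega), norm_div, norm_sub_rev ((2 : ℂ) ^ m) (2 ^ (m + 1 + j)),
    ← norm_div]
  exact norm_two_pow_sub_div_le hz m j

lemma norm_lagrangeTerm_le_of_gt (hz : ‖z‖ ≤ r) (n j : ℕ) :
    ‖lagrangeTerm n (n + 1 + j) z‖ ≤ (r + 1) / 2 ^ j := by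
  have hr : 0 ≤ r := (norm_nonneg z).trans hz
  rw [lagrangeTerm]
  split_ifs
  · exact norm_two_pow_sub_div_le hz n j
  · rw [norm_zero]; positivity

lemma differentiable_lagrangeTerm (n m : ℕ) : Differentiable ℂ (lagrangeTerm n m) := by
  unfold lagrangeTerm
  split_ifs <;> fun_prop

lemma hasProdLocallyUniformlyOn_lagrangeBasis (n : ℕ) (ρ : ℝ) :
    HasProdLocallyUniformlyOn (fun m z => 1 + lagrangeTerm n m z) (lagrangeBasis n)
      (Metric.ball 0 ρ) := by
  refine Summable.hasProdLocallyUniformlyOn_nat_one_add Metric.isOpen_ball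
    (u := fun m => (ρ + 1) * 2 ^ (n + 1) * (1 / 2) ^ m) (summable_geometric_two.mul_left _) ?_
    fun m => (differentiable_lagrangeTerm n m).continuous.continuousOn
  filter_upwards [eventually_ge_atTop (n + 1)] with m hm z hz
  obtain ⟨j, rfl⟩ := Nat.exists_eq_add_of_le hm
  have hz : ‖z‖ ≤ ρ := by simpa using (mem_ball_zero_iff.mp hz).le
  refine (norm_lagrangeTerm_le_of_gt hz n j).trans (le_of_eq ?_)
  rw [one_div_pow, pow_add]
  field_simp
  ring

lemma hasProd_lagrangeBasis (n : ℕ) (z : ℂ) :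
    HasProd (fun m => 1 + lagrangeTerm n m z) (lagrangeBasis n z) :=
  (hasProdLocallyUniformlyOn_lagrangeBasis n (‖z‖ + 1)).hasProd (by simp)

lemma differentiable_lagrangeBasis (n : ℕ) : Differentiable ℂ (lagrangeBasis n) := by
  intro z
  have hdiff := (hasProdLocallyUniformlyOn_lagrangeBasis n (‖z‖ + 1)).differentiableOn
    (.of_forall fun s => by
      simpa [Finset.prod_fn] using DifferentiableOn.finsetProd fun m _ =>
        ((differentiable_lagrangeTerm n m).const_add 1).differentiableOn) Metric.isOpen_ball
  exact hdiff.differentiableAt (Metric.isOpen_ball.mem_nhds (by simp))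

lemma lagrangeBasis_two_pow_self (n : ℕ) : lagrangeBasis n (2 ^ n) = 1 := by
  simp [lagrangeBasis, lagrangeTerm_two_pow_self]

lemma lagrangeBasis_two_pow_of_ne {k : ℕ} (h2 : 2 ≤ k) (hkn : k ≠ n) :
    lagrangeBasis n (2 ^ k) = 0 :=
  tprod_of_exists_eq_zero ⟨k, one_add_lagrangeTerm_two_pow h2 hkn⟩

lemma norm_prod_range_lagrangeTerm_le (hz : ‖z‖ ≤ r) (κ K : ℕ) :
    ‖∏ m ∈ range (2 + κ + 1 + K), (1 + lagrangeTerm (2 + κ) m z)‖ ≤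
      (∏ j ∈ range κ, (r + 1) / 2 ^ j) * ∏ j ∈ range K, (1 + (r + 1) / 2 ^ j) := by
  rw [prod_range_add, prod_range_succ, prod_range_add, lagrangeTerm_self]
  simp only [prod_range_succ, range_zero, prod_empty, lagrangeTerm_of_lt_two (by norm_num : 0 < 2),
    lagrangeTerm_of_lt_two (by norm_num : 1 < 2), add_zero, one_mul, mul_one, norm_mul, norm_prod]
  have hr : 0 ≤ r := (norm_nonneg z).trans hz
  refine mul_le_mul ?_ (prod_le_prod (fun _ _ => norm_nonneg _) fun i _ => ?_)
    (prod_nonneg fun _ _ => norm_nonneg _) (prod_nonneg fun _ _ => by positivity)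
  · rw [← prod_range_reflect (fun j => (r + 1) / 2 ^ j)]
    refine prod_le_prod (fun _ _ => norm_nonneg _) fun i hi => ?_
    have : 2 + κ = 2 + i + 1 + (κ - 1 - i) := by have := mem_range.1 hi; omega
    rw [this]
    exact norm_one_add_lagrangeTerm_le_of_lt hz (Nat.le_add_right 2 i) _
  · refine (norm_add_le _ _).trans ?_
    rw [norm_one]
    exact add_le_add_right (norm_lagrangeTerm_le_of_gt hz _ _) 1

lemma prod_range_one_add_div_two_pow_le {x : ℝ} (hx : 0 ≤ x) (K k : ℕ) :
    ∏ j ∈ range K, (1 + x / 2 ^ j) ≤ (1 + x) ^ k * exp (2 * x / 2 ^ k) := by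
  induction k generalizing x K with
  | zero =>
    calc ∏ j ∈ range K, (1 + x / 2 ^ j) ≤ ∏ j ∈ range K, exp (x / 2 ^ j) :=
          prod_le_prod (fun _ _ => by positivity) fun j _ => by
            linarith [add_one_le_exp (x / 2 ^ j)]
      _ = exp (x * ∑ j ∈ range K, (1 / 2) ^ j) := by
          rw [← exp_sum, mul_sum]; simp [div_eq_mul_inv]
      _ ≤ (1 + x) ^ 0 * exp (2 * x / 2 ^ 0) := by
          rw [pow_zero, pow_zero, one_mul, div_one, mul_comm 2 x]
          gcongr
          exact sum_geometric_two_le K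
  | succ k ih =>
    cases K with
    | zero =>
      rw [prod_range_zero]
      exact one_le_mul_of_one_le_of_one_le (one_le_pow₀ (by linarith)) (one_le_exp (by positivity))
    | succ K =>
      have hK := ih (x := x / 2) (by positivity) K
      rw [prod_range_succ']
      calc (∏ j ∈ range K, (1 + x / 2 ^ (j + 1))) * (1 + x / 2 ^ 0)
          = (∏ j ∈ range K, (1 + x / 2 / 2 ^ j)) * (1 + x) := by
            simp only [pow_succ, pow_zero, div_one, div_div, mul_comm]
        _ ≤ (1 + x / 2) ^ k * exp (2 * (x / 2) / 2 ^ k) * (1 + x) := by gcongr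
        _ ≤ (1 + x) ^ k * exp (2 * x / 2 ^ (k + 1)) * (1 + x) := by
            have h : 2 * (x / 2) / 2 ^ k = 2 * x / 2 ^ (k + 1) := by rw [pow_succ]; ring
            rw [h]
            gcongr
            linarith
        _ = (1 + x) ^ (k + 1) * exp (2 * x / 2 ^ (k + 1)) := by ring

lemma log_two_mem_Ioo : log 2 ∈ Set.Ioo (1 / 2) 1 :=
  ⟨by linarith [log_two_gt_d9], by linarith [log_two_lt_d9]⟩

lemma prod_range_one_add_div_two_pow_le_exp {x : ℝ} (hx : 1 ≤ x) (K : ℕ) :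
    ∏ j ∈ range K, (1 + x / 2 ^ j) ≤ exp (5 + 4 * log x ^ 2) := by
  set k := ⌈logb 2 x⌉₊
  have hlogb : 0 ≤ logb 2 x := logb_nonneg one_lt_two hx
  have hxk : x ≤ 2 ^ k := by
    calc x = 2 ^ logb 2 x := (rpow_logb two_pos (by norm_num) (by linarith)).symm
      _ ≤ 2 ^ (k : ℝ) := rpow_le_rpow_of_exponent_le one_le_two (Nat.le_ceil _)
      _ = 2 ^ k := rpow_natCast 2 k
  have hk : (k : ℝ) * log 2 ≤ log x + log 2 := by
    have h := mul_lt_mul_of_pos_right (Nat.ceil_lt_add_one hlogb) (log_pos one_lt_two)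
    rw [add_mul, logb, div_mul_cancel₀ _ (log_pos one_lt_two).ne', one_mul] at h
    exact h.le
  have h1x : log (1 + x) ≤ log 2 + log x := by
    rw [← log_mul two_ne_zero (by linarith)]
    exact log_le_log (by linarith) (by linarith)
  obtain ⟨hl1, hl2⟩ := log_two_mem_Ioo
  have hL : 0 ≤ log x := log_nonneg hx
  calc ∏ j ∈ range K, (1 + x / 2 ^ j) ≤ (1 + x) ^ k * exp (2 * x / 2 ^ k) :=
        prod_range_one_add_div_two_pow_le (by linarith) K k
    _ ≤ exp (k * (log 2 + log x)) * exp 2 := by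
        gcongr
        · rw [← exp_log (by linarith : 0 < 1 + x), ← exp_nat_mul]
          gcongr
        · rw [div_le_iff₀ (by positivity)]; linarith
    _ ≤ exp (5 + 4 * log x ^ 2) := by
        rw [← exp_add, exp_le_exp]
        have hkL : 0 ≤ (k : ℝ) * log x := mul_nonneg k.cast_nonneg hL
        nlinarith [sq_nonneg (log x - 1),
          mul_le_mul_of_nonneg_left hk (by linarith : 0 ≤ 2 * log x), mul_nonneg hkL (by linarith : 0 ≤ 2 * log 2 - 1)]

lemma sum_range_natCast (κ : ℕ) : ∑ j ∈ range κ, (j : ℝ) = κ * (κ - 1) / 2 := by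
  induction κ with
  | zero => simp
  | succ κ ih => rw [sum_range_succ, ih]; push_cast; ring

lemma prod_range_div_two_pow {x : ℝ} (hx : 0 < x) (κ : ℕ) :
    ∏ j ∈ range κ, x / 2 ^ j = exp (κ * log x - κ * (κ - 1) / 2 * log 2) := by
  have h : ∀ j : ℕ, x / 2 ^ j = exp (log x - j * log 2) := fun j => by
    rw [exp_sub, exp_log hx, exp_nat_mul, exp_log two_pos]
  simp_rw [h, ← exp_sum, sum_sub_distrib, sum_const, card_range, nsmul_eq_mul, ← sum_mul,
    sum_range_natCast]

lemma sq_mul_prod_range_div_two_pow_le {x : ℝ} (hx : 0 < x) (κ : ℕ) :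
    ((2 + κ : ℕ) : ℝ) ^ 2 * ∏ j ∈ range κ, x / 2 ^ j ≤
      exp (29 + 2 * log x ^ 2) * (1 / 2) ^ (2 + κ) := by
  have hsq : ((2 + κ : ℕ) : ℝ) ^ 2 ≤ exp (2 * (κ + 1)) := by
    calc ((2 + κ : ℕ) : ℝ) ^ 2 ≤ exp (κ + 1) ^ 2 := by
          push_cast
          gcongr
          linarith [add_one_le_exp ((κ : ℝ) + 1)]
      _ = exp (2 * (κ + 1)) := by rw [sq, ← exp_add, two_mul]
  have hhalf : ((1 : ℝ) / 2) ^ (2 + κ) = exp (-((2 + κ : ℕ) * log 2)) := by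
    rw [exp_neg, exp_nat_mul, exp_log two_pos, one_div_pow, one_div]
  rw [prod_range_div_two_pow hx, hhalf]
  calc ((2 + κ : ℕ) : ℝ) ^ 2 * exp (κ * log x - κ * (κ - 1) / 2 * log 2)
      ≤ exp (2 * (κ + 1)) * exp (κ * log x - κ * (κ - 1) / 2 * log 2) := by gcongr
    _ ≤ exp (29 + 2 * log x ^ 2) * exp (-((2 + κ : ℕ) * log 2)) := by
      rw [← exp_add, ← exp_add, exp_le_exp]
      -- a concave quadratic in `κ`: complete the square
      obtain ⟨hl1, hl2⟩ := log_two_mem_Ioo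
      have hκ : (0 : ℝ) ≤ κ := κ.cast_nonneg
      push_cast
      nlinarith [sq_nonneg ((κ : ℝ) / 2 - 4 - log x), sq_nonneg (log x - 4),
        mul_nonneg hκ (by linarith : (0 : ℝ) ≤ 1 - log 2),
        mul_nonneg (mul_nonneg hκ hκ) (by linarith : (0 : ℝ) ≤ log 2 - 1 / 2)]

lemma norm_lagrangeBasis_le (hz : ‖z‖ ≤ r) (κ : ℕ) :
    ‖lagrangeBasis (2 + κ) z‖ ≤
      (∏ j ∈ range κ, (r + 1) / 2 ^ j) * exp (5 + 4 * log (r + 1) ^ 2) := by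
  have hr : 0 ≤ r := (norm_nonneg z).trans hz
  refine le_of_tendsto (hasProd_lagrangeBasis _ z).tendsto_prod_nat.norm ?_
  filter_upwards [eventually_ge_atTop (2 + κ + 1)] with N hN
  obtain ⟨K, rfl⟩ := Nat.exists_eq_add_of_le hN
  refine (norm_prod_range_lagrangeTerm_le hz κ K).trans ?_
  gcongr
  exact prod_range_one_add_div_two_pow_le_exp (by linarith) K

lemma sq_mul_norm_lagrangeBasis_le (hz : ‖z‖ ≤ r) (h2 : 2 ≤ n) :
    (n : ℝ) ^ 2 * ‖lagrangeBasis n z‖ ≤ exp (34 + 6 * log (r + 1) ^ 2) * (1 / 2) ^ n := by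
  have hr : 0 ≤ r := (norm_nonneg z).trans hz
  obtain ⟨κ, rfl⟩ := Nat.exists_eq_add_of_le h2
  calc ((2 + κ : ℕ) : ℝ) ^ 2 * ‖lagrangeBasis (2 + κ) z‖
      ≤ (2 + κ : ℕ) ^ 2 * ((∏ j ∈ range κ, (r + 1) / 2 ^ j) * exp (5 + 4 * log (r + 1) ^ 2)) := by
        gcongr; exact norm_lagrangeBasis_le hz κ
    _ ≤ exp (29 + 2 * log (r + 1) ^ 2) * (1 / 2) ^ (2 + κ) * exp (5 + 4 * log (r + 1) ^ 2) := by
        rw [← mul_assoc]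
        exact mul_le_mul_of_nonneg_right
          (sq_mul_prod_range_div_two_pow_le (by linarith) κ) (exp_nonneg _)
    _ = exp (34 + 6 * log (r + 1) ^ 2) * (1 / 2) ^ (2 + κ) := by
        rw [mul_right_comm, ← exp_add]; ring_nf

noncomputable def dispatcher (J : Set ℕ) (w z : ℂ) : ℂ :=
  ∑' n, J.indicator (fun n => w * lagrangeBasis n z) n

section

variable {J : Set ℕ} {w : ℂ}

lemma norm_indicator_lagrangeBasis_le (hJ : ∀ n ∈ J, 2 ≤ n) (hwJ : ∀ n ∈ J, ‖w‖ ≤ n ^ 2)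
    (hz : ‖z‖ ≤ r) (n : ℕ) :
    ‖J.indicator (fun n => w * lagrangeBasis n z) n‖ ≤
      exp (34 + 6 * log (r + 1) ^ 2) * (1 / 2) ^ n := by
  by_cases hn : n ∈ J
  · rw [Set.indicator_of_mem hn, norm_mul]
    exact (mul_le_mul_of_nonneg_right (hwJ n hn) (norm_nonneg _)).trans
      (sq_mul_norm_lagrangeBasis_le hz (hJ n hn))
  · rw [Set.indicator_of_notMem hn, norm_zero]
    positivity

lemma differentiable_dispatcher (hJ : ∀ n ∈ J, 2 ≤ n) (hwJ : ∀ n ∈ J, ‖w‖ ≤ n ^ 2) :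
    Differentiable ℂ (dispatcher J w) := by
  intro z
  have hdiff := Complex.differentiableOn_tsum_of_summable_norm
    (summable_geometric_two.mul_left (exp (34 + 6 * log (‖z‖ + 1 + 1) ^ 2)))
    (fun n => ?_) Metric.isOpen_ball
    fun n y hy => norm_indicator_lagrangeBasis_le hJ hwJ (mem_ball_zero_iff.1 hy).le n
  · exact hdiff.differentiableAt (Metric.isOpen_ball.mem_nhds (by simp))
  · by_cases hn : n ∈ J
    · simpa [hn] using ((differentiable_lagrangeBasis n).const_mul w).differentiableOn
    · simp [hn]

lemma norm_dispatcher_le (hJ : ∀ n ∈ J, 2 ≤ n) (hwJ : ∀ n ∈ J, ‖w‖ ≤ n ^ 2) (hz : ‖z‖ ≤ r) :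
    ‖dispatcher J w z‖ ≤ exp (35 + 6 * log (r + 1) ^ 2) := by
  refine (tsum_of_norm_bounded (hasSum_geometric_two.mul_left _)
    (norm_indicator_lagrangeBasis_le hJ hwJ hz)).trans ?_
  calc exp (34 + 6 * log (r + 1) ^ 2) * 2 ≤ exp (34 + 6 * log (r + 1) ^ 2) * exp 1 := by
        gcongr; linarith [add_one_le_exp 1]
    _ = exp (35 + 6 * log (r + 1) ^ 2) := by rw [← exp_add]; ring_nf

lemma dispatcher_two_pow {k : ℕ} (h2 : 2 ≤ k) :
    dispatcher J w (2 ^ k) = J.indicator (fun _ => w) k := by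
  rw [dispatcher, tsum_eq_single k]
  · by_cases hk : k ∈ J <;> simp [hk, lagrangeBasis_two_pow_self]
  · intro n hnk
    by_cases hn : n ∈ J <;> simp [hn, lagrangeBasis_two_pow_of_ne h2 (Ne.symm hnk)]

end

end Dispatcher

theorem dispatcher_lemma :
    ∃ C : ℝ, 1 < C ∧
      ∀ J : Set ℕ, J.Nonempty → (∀ n ∈ J, 2 ≤ n) →
        ∀ M : ℝ, 0 < M → M ≤ ((sInf J : ℕ) : ℝ) ^ 2 →
          ∃ f : ℂ → ℂ, Differentiable ℂ f ∧
            (∀ r : ℝ, 0 < r → ∀ z : ℂ, ‖z‖ ≤ r →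
              ‖f z‖ ≤ C * Real.exp (C * Real.log (r + 1) ^ 2)) ∧
            (∀ n ∈ J, f (2 ^ n) = (M : ℂ)) ∧
            (∀ n : ℕ, 2 ≤ n → n ∉ J → f (2 ^ n) = 0) := by
  refine ⟨exp 35, one_lt_exp_iff.2 (by norm_num), fun J _ hJ M hM0 hM => ?_⟩
  have hMJ : ∀ n ∈ J, ‖(M : ℂ)‖ ≤ n ^ 2 := fun n hn => by
    rw [Complex.norm_real, Real.norm_of_nonneg hM0.le]
    exact hM.trans (by gcongr; exact Nat.sInf_le hn)
  refine ⟨Dispatcher.dispatcher J M, Dispatcher.differentiable_dispatcher hJ hMJ,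
    fun r _ z hz => ?_, fun n hn => ?_, fun n h2 hn => ?_⟩
  · calc ‖Dispatcher.dispatcher J M z‖ ≤ exp (35 + 6 * log (r + 1) ^ 2) :=
          Dispatcher.norm_dispatcher_le hJ hMJ hz
      _ ≤ exp 35 * exp (exp 35 * log (r + 1) ^ 2) := by
        rw [← exp_add]; gcongr; linarith [add_one_le_exp 35]
  · rw [Dispatcher.dispatcher_two_pow (hJ n hn), Set.indicator_of_mem hn]
  · rw [Dispatcher.dispatcher_two_pow h2, Set.indicator_of_notMem hn]
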